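/- arXiv:math/0608593 — 5 statements merged into one kernel-verified Lean document; each statement's English description precedes it below -/
import Mathlib

section
/- For every q ∈ ℂ with q ∉ {0,1}: the Weierstrass equation defining E₁(q) has nonzero discriminant (so E₁(q) is an elliptic curve over ℂ(T)), the point P = (0,0) lies on E₁(q), and P has infinite order in the group E₁(q)(ℂ(T)), i.e. k•P ≠ O for every positive integer k. -/
open Polynomial WeierstrassCurve

/-- The dehomogenized curve `E₁(q)` of Elkies' paper, over `ℂ(T)`:
`Y² + (1 − (q+1)T)XY + qT(T−1)Y = X³ − qTX²`. -/
noncomputable def E₁ (q : ℂ) : WeierstrassCurve.Affine (RatFunc ℂ) where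
  a₁ := algebraMap (Polynomial ℂ) (RatFunc ℂ) (1 - C (q + 1) * X)
  a₂ := algebraMap (Polynomial ℂ) (RatFunc ℂ) (-(C q * X))
  a₃ := algebraMap (Polynomial ℂ) (RatFunc ℂ) (C q * X * (X - 1))
  a₄ := 0
  a₆ := 0

/-!
The multiples `2P = (qT, q²T²)`, `3P = (qT(1 - T), qT²(1 - T))` and `4P = (T, (q - 1)T)` have
polynomial coordinates, but `7P` has a pole at `T = t₀ := (q - 1) / q`, of order two in `x` and
three in `y`. The equation of `E₁(q)` is integral at `t₀`, so `7P` lies in the formal group there,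
with formal parameter `z = -x / y = w (T - t₀) + …` for some `w ≠ 0`. To first order the formal
group law is `z₁ + z₂`, so `n • 7P` has parameter `n w (T - t₀) + …`; as `n w ≠ 0` in
characteristic zero, `n • 7P ≠ 0` for every `n > 0`, hence no positive multiple of `P` vanishes.
-/

section LeadingTerm

variable {F : Type*} [Field F] {t : F}

/-- `f = c (X - t) ^ k + O((X - t) ^ (k + 1))`, encoded through a fraction `a / b` with
`b (t) ≠ 0`; the coefficient `c` may vanish. -/
def HasLeadingTerm (t : F) (k : ℤ) (c : F) (f : RatFunc F) : Prop :=
  ∃ a b : F[X], b.eval t ≠ 0 ∧ a.eval t = c * b.eval t ∧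
    f = (RatFunc.X - RatFunc.C t) ^ k *
      (algebraMap F[X] (RatFunc F) a / algebraMap F[X] (RatFunc F) b)

lemma algebraMap_ne_zero_of_eval_ne_zero {p : F[X]} {z : F} (h : p.eval z ≠ 0) :
    algebraMap F[X] (RatFunc F) p ≠ 0 :=
  RatFunc.algebraMap_ne_zero (by rintro rfl; exact h (eval_zero))

lemma RatFunc.C_ne_zero {c : F} (hc : c ≠ 0) : RatFunc.C c ≠ 0 :=
  (_root_.map_ne_zero RatFunc.C).mpr hc

lemma RatFunc.X_sub_C_ne_zero (t : F) : (RatFunc.X - RatFunc.C t : RatFunc F) ≠ 0 := by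
  rw [← RatFunc.algebraMap_X, ← RatFunc.algebraMap_C, ← map_sub]
  exact RatFunc.algebraMap_ne_zero (Polynomial.X_sub_C_ne_zero t)

namespace HasLeadingTerm

variable {k k' : ℤ} {c c' : F} {f f' : RatFunc F}

lemma add (h : HasLeadingTerm t k c f) (h' : HasLeadingTerm t k c' f') :
    HasLeadingTerm t k (c + c') (f + f') := by
  obtain ⟨a, b, hb, ha, rfl⟩ := h
  obtain ⟨a', b', hb', ha', rfl⟩ := h'
  refine ⟨a * b' + a' * b, b * b', by simp [hb, hb'], by simp [ha, ha']; ring, ?_⟩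
  have := algebraMap_ne_zero_of_eval_ne_zero hb
  have := algebraMap_ne_zero_of_eval_ne_zero hb'
  simp only [map_add, map_mul]
  field_simp

lemma neg (h : HasLeadingTerm t k c f) : HasLeadingTerm t k (-c) (-f) := by
  obtain ⟨a, b, hb, ha, rfl⟩ := h
  exact ⟨-a, b, hb, by simp [ha], by simp only [map_neg]; ring⟩

lemma sub (h : HasLeadingTerm t k c f) (h' : HasLeadingTerm t k c' f') :
    HasLeadingTerm t k (c - c') (f - f') := by
  simpa only [sub_eq_add_neg] using h.add h'.neg

lemma mul (h : HasLeadingTerm t k c f) (h' : HasLeadingTerm t k' c' f') :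
    HasLeadingTerm t (k + k') (c * c') (f * f') := by
  obtain ⟨a, b, hb, ha, rfl⟩ := h
  obtain ⟨a', b', hb', ha', rfl⟩ := h'
  refine ⟨a * a', b * b', by simp [hb, hb'], by simp [ha, ha']; ring, ?_⟩
  rw [zpow_add₀ (RatFunc.X_sub_C_ne_zero t), map_mul, map_mul, mul_div_mul_comm]
  ring

lemma ne_zero (h : HasLeadingTerm t k c f) (hc : c ≠ 0) : f ≠ 0 := by
  obtain ⟨a, b, hb, ha, rfl⟩ := h
  exact mul_ne_zero (zpow_ne_zero _ (RatFunc.X_sub_C_ne_zero t)) <| div_ne_zero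
    (algebraMap_ne_zero_of_eval_ne_zero (ha ▸ mul_ne_zero hc hb))
    (algebraMap_ne_zero_of_eval_ne_zero hb)

lemma inv (h : HasLeadingTerm t k c f) (hc : c ≠ 0) : HasLeadingTerm t (-k) c⁻¹ f⁻¹ := by
  obtain ⟨a, b, hb, ha, rfl⟩ := h
  refine ⟨b, a, by rw [ha]; exact mul_ne_zero hc hb, by rw [ha]; field_simp, ?_⟩
  rw [mul_inv, inv_div, zpow_neg]

lemma div (h : HasLeadingTerm t k c f) (h' : HasLeadingTerm t k' c' f') (hc' : c' ≠ 0) :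
    HasLeadingTerm t (k - k') (c / c') (f / f') := by
  simpa only [div_eq_mul_inv, sub_eq_add_neg] using h.mul (h'.inv hc')

lemma pow (h : HasLeadingTerm t k c f) (n : ℕ) : HasLeadingTerm t (n * k) (c ^ n) (f ^ n) := by
  induction n with
  | zero => exact ⟨1, 1, by simp, by simp, by simp⟩
  | succ n ih => simpa only [pow_succ, Nat.cast_succ, add_mul, one_mul] using ih.mul h

lemma zero_of_lt {j : ℤ} (h : HasLeadingTerm t k c f) (hjk : j < k) : HasLeadingTerm t j 0 f := by
  obtain ⟨a, b, hb, ha, rfl⟩ := h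
  obtain ⟨n, hn⟩ : ∃ n : ℕ, k = j + (n + 1 : ℕ) := ⟨(k - j - 1).toNat, by omega⟩
  refine ⟨(X - C t) ^ (n + 1) * a, b, hb, by simp, ?_⟩
  rw [hn, zpow_add₀ (RatFunc.X_sub_C_ne_zero t), zpow_natCast, map_mul, map_pow, map_sub,
    RatFunc.algebraMap_X, RatFunc.algebraMap_C]
  ring

lemma of_eq {c' : F} (h : HasLeadingTerm t k c f) (hc : c = c') (hf : f = f') :
    HasLeadingTerm t k c' f' :=
  hc ▸ hf ▸ h

lemma add_of_lt {j : ℤ} (h : HasLeadingTerm t k c f) (h' : HasLeadingTerm t j c' f') (hkj : k < j) :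
    HasLeadingTerm t k c (f + f') := by
  simpa using h.add (h'.zero_of_lt hkj)

end HasLeadingTerm

lemma hasLeadingTerm_algebraMap (p : F[X]) :
    HasLeadingTerm t 0 (p.eval t) (algebraMap F[X] (RatFunc F) p) :=
  ⟨p, 1, by simp, by simp, by simp⟩

lemma hasLeadingTerm_zero {k : ℤ} : HasLeadingTerm t k 0 0 :=
  ⟨0, 1, by simp, by simp, by simp⟩

lemma hasLeadingTerm_C (c : F) : HasLeadingTerm t 0 c (RatFunc.C c) := by
  simpa using hasLeadingTerm_algebraMap (t := t) (C c)

lemma hasLeadingTerm_X_sub_C : HasLeadingTerm t 1 1 (RatFunc.X - RatFunc.C t) :=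
  ⟨1, 1, by simp, by simp, by simp⟩

end LeadingTerm

lemma exists_some_add_some_eq {F : Type*} [Field F] [DecidableEq F]
    {W : WeierstrassCurve.Affine F} {x₁ x₂ y₁ y₂ x₃ y₃ : F}
    (h₁ : W.Nonsingular x₁ y₁) (h₂ : W.Nonsingular x₂ y₂) (hxy : ¬(x₁ = x₂ ∧ y₁ = W.negY x₂ y₂))
    (hx : W.addX x₁ x₂ (W.slope x₁ x₂ y₁ y₂) = x₃)
    (hy : W.addY x₁ x₂ y₁ (W.slope x₁ x₂ y₁ y₂) = y₃) :
    ∃ h₃ : W.Nonsingular x₃ y₃,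
      Affine.Point.some _ _ h₁ + Affine.Point.some _ _ h₂ = Affine.Point.some _ _ h₃ := by
  subst hx hy
  exact ⟨_, Affine.Point.add_some hxy⟩

section FormalGroup

open WeierstrassCurve.Affine

variable {F : Type*} [Field F] {t : F}

def IsRegularAt (t : F) (f : RatFunc F) : Prop := ∃ c, HasLeadingTerm t 0 c f

/-- The point `(x, y)` lies in the formal group at `t`, with formal parameter
`-x / y = w (X - t) + O((X - t)²)`. -/
def HasFormalParam (t w : F) (x y : RatFunc F) : Prop :=
  HasLeadingTerm t (-2) (w ^ 2)⁻¹ x ∧ HasLeadingTerm t (-3) (w ^ 3)⁻¹ y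

def WeierstrassCurve.IsIntegralAt (t : F) (W : WeierstrassCurve (RatFunc F)) : Prop :=
  IsRegularAt t W.a₁ ∧ IsRegularAt t W.a₂ ∧ IsRegularAt t W.a₃ ∧ IsRegularAt t W.a₄ ∧
    IsRegularAt t W.a₆

variable {W : WeierstrassCurve.Affine (RatFunc F)}

-- `ℓ` is the leading term of the slope of the chord (or tangent) through points with formal
-- parameters `w₁ (X - t)` and `w₂ (X - t)`; the parameters add to first order.
lemma hasFormalParam_addX_addY (hW : W.IsIntegralAt t) {x₁ x₂ y₁ ℓ : RatFunc F} {w₁ w₂ : F}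
    (hw₁ : w₁ ≠ 0) (hw₂ : w₂ ≠ 0) (hw : w₁ + w₂ ≠ 0)
    (hp₁ : HasFormalParam t w₁ x₁ y₁) (hx₂ : HasLeadingTerm t (-2) (w₂ ^ 2)⁻¹ x₂)
    (hℓ : HasLeadingTerm t (-1) ((w₁ ^ 2 + w₁ * w₂ + w₂ ^ 2) / (w₁ * w₂ * (w₁ + w₂))) ℓ) :
    HasFormalParam t (w₁ + w₂) (W.addX x₁ x₂ ℓ) (W.addY x₁ x₂ y₁ ℓ) := by
  obtain ⟨⟨c₁, hc₁⟩, ⟨c₂, hc₂⟩, ⟨c₃, hc₃⟩, -⟩ := hW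
  have hX : HasLeadingTerm t (-2) ((w₁ + w₂) ^ 2)⁻¹ (W.addX x₁ x₂ ℓ) := by
    have := (((hℓ.mul hℓ).add_of_lt (hc₁.mul hℓ) (by norm_num)).sub
      (hc₂.zero_of_lt (by norm_num)) |>.sub hp₁.1 |>.sub hx₂)
    refine this.of_eq (by field_simp; ring) ?_
    rw [WeierstrassCurve.Affine.addX]; ring
  refine ⟨hX, ?_⟩
  have := ((hℓ.mul (hX.sub hp₁.1)).add hp₁.2).neg.sub
      ((hc₁.mul hX).add (hc₃.zero_of_lt (by norm_num)) |>.zero_of_lt (by norm_num))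
  refine this.of_eq (by field_simp; ring) ?_
  rw [WeierstrassCurve.Affine.addY, WeierstrassCurve.Affine.negAddY, WeierstrassCurve.Affine.negY]
  ring

open WeierstrassCurve.Affine.Point

variable [DecidableEq (RatFunc F)]

lemma exists_add_hasFormalParam (hW : W.IsIntegralAt t) {x₁ x₂ y₁ y₂ : RatFunc F} {w₁ w₂ : F}
    (h₁ : W.Nonsingular x₁ y₁) (h₂ : W.Nonsingular x₂ y₂) (hw₁ : w₁ ≠ 0) (hw₂ : w₂ ≠ 0)
    (hw : w₁ ^ 2 ≠ w₂ ^ 2) (hp₁ : HasFormalParam t w₁ x₁ y₁) (hp₂ : HasFormalParam t w₂ x₂ y₂) :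
    ∃ (x y : RatFunc F) (h : W.Nonsingular x y),
      some _ _ h₁ + some _ _ h₂ = some _ _ h ∧ HasFormalParam t (w₁ + w₂) x y := by
  have hw' : w₁ + w₂ ≠ 0 := fun h ↦ hw (by rw [eq_neg_of_add_eq_zero_left h]; ring)
  have hc : (w₁ ^ 2)⁻¹ - (w₂ ^ 2)⁻¹ ≠ 0 := sub_ne_zero.mpr (by simpa using hw)
  have hdx := hp₁.1.sub hp₂.1
  have hx : x₁ ≠ x₂ := sub_ne_zero.mp (hdx.ne_zero hc)
  have hℓ := (hp₁.2.sub hp₂.2).div hdx hc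
  rw [← slope_of_X_ne (W := W) (y₁ := y₁) (y₂ := y₂) hx] at hℓ
  refine ⟨_, _, nonsingular_add h₁ h₂ fun h ↦ hx h.1, add_of_X_ne hx,
    hasFormalParam_addX_addY hW hw₁ hw₂ hw' hp₁ hp₂.1 (hℓ.of_eq ?_ rfl)⟩
  have : w₁ - w₂ ≠ 0 := fun h ↦ hw (by rw [sub_eq_zero.mp h])
  field_simp
  ring

lemma exists_two_nsmul_hasFormalParam [NeZero (2 : F)] (hW : W.IsIntegralAt t)
    {x y : RatFunc F} {w : F} (h : W.Nonsingular x y) (hw : w ≠ 0) (hp : HasFormalParam t w x y) :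
    ∃ (x' y' : RatFunc F) (h' : W.Nonsingular x' y'),
      2 • some _ _ h = some _ _ h' ∧ HasFormalParam t (w + w) x' y' := by
  obtain ⟨⟨c₁, hc₁⟩, ⟨c₂, hc₂⟩, ⟨c₃, hc₃⟩, ⟨c₄, hc₄⟩, -⟩ := id hW
  have h2 : (2 : F) ≠ 0 := two_ne_zero
  have hc : 2 * (w ^ 3)⁻¹ ≠ 0 := mul_ne_zero h2 (by simpa using hw)
  have hdy : HasLeadingTerm t (-3) (2 * (w ^ 3)⁻¹) (y - W.negY x y) := by
    refine ((hp.2.add hp.2).add_of_lt ((hc₁.mul hp.1).add (hc₃.zero_of_lt (by norm_num)))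
      (by norm_num)).of_eq (by ring) ?_
    rw [negY]; ring
  have hy : y ≠ W.negY x y := sub_ne_zero.mp (hdy.ne_zero hc)
  have hnum : HasLeadingTerm t (-4) (3 * (w ^ 2)⁻¹ ^ 2)
      (3 * x ^ 2 + 2 * W.a₂ * x + W.a₄ - W.a₁ * y) := by
    have ha₁y : HasLeadingTerm t (-3) (c₁ * (w ^ 3)⁻¹) (W.a₁ * y) := by
      simpa using hc₁.mul hp.2
    have hrest := ((((hasLeadingTerm_C 2).mul hc₂).mul hp.1).zero_of_lt (j := -3) (by norm_num)
      |>.add (hc₄.zero_of_lt (by norm_num))).sub ha₁y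
    refine (((hasLeadingTerm_C 3).mul (hp.1.mul hp.1)).add_of_lt hrest (by norm_num)).of_eq
      (by ring) ?_
    simp only [map_ofNat]; ring
  have hℓ := hnum.div hdy hc
  rw [← slope_of_Y_ne rfl hy] at hℓ
  refine ⟨_, _, nonsingular_add h h fun h ↦ hy h.2, by rw [two_nsmul, add_self_of_Y_ne hy],
    hasFormalParam_addX_addY hW hw hw (by rw [← two_mul]; exact mul_ne_zero h2 hw) hp hp.1
      (hℓ.of_eq ?_ rfl)⟩
  field_simp
  linear_combination -3 * inv_mul_cancel₀ h2

lemma exists_succ_nsmul_hasFormalParam [CharZero F] (hW : W.IsIntegralAt t) {x y : RatFunc F}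
    {w : F} (h : W.Nonsingular x y) (hw : w ≠ 0) (hp : HasFormalParam t w x y) (n : ℕ) :
    ∃ (x' y' : RatFunc F) (h' : W.Nonsingular x' y'),
      (n + 1) • some _ _ h = some _ _ h' ∧ HasFormalParam t ((n + 1) * w) x' y' := by
  induction n with
  | zero => exact ⟨x, y, h, one_nsmul _, by simpa using hp⟩
  | succ n ih =>
    rcases n with _ | n
    · obtain ⟨x', y', h', e, hp'⟩ := exists_two_nsmul_hasFormalParam hW h hw hp
      exact ⟨x', y', h', e, by convert hp' using 1; push_cast; ring⟩
    obtain ⟨x', y', h', e, hp'⟩ := ih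
    push_cast at hp'
    have hn : ((n : F) + 1 + 1) * w ≠ 0 := mul_ne_zero (by norm_cast) hw
    have hsq : (((n : F) + 1 + 1) * w) ^ 2 ≠ w ^ 2 := by
      rw [mul_pow, Ne, mul_eq_right₀ (pow_ne_zero 2 hw)]
      norm_cast
      exact (Nat.one_lt_pow two_ne_zero (by omega)).ne'
    obtain ⟨x'', y'', h'', e', hp''⟩ := exists_add_hasFormalParam hW h' h hn hw hsq hp' hp
    refine ⟨x'', y'', h'', by rw [succ_nsmul, e, e'], by convert hp'' using 1; push_cast; ring⟩

lemma nsmul_some_ne_zero_of_hasFormalParam [CharZero F] (hW : W.IsIntegralAt t)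
    {x y : RatFunc F} {w : F} (h : W.Nonsingular x y) (hw : w ≠ 0) (hp : HasFormalParam t w x y)
    {n : ℕ} (hn : n ≠ 0) : n • some _ _ h ≠ 0 := by
  obtain ⟨n, rfl⟩ := Nat.exists_eq_succ_of_ne_zero hn
  obtain ⟨x', y', h', e, -⟩ := exists_succ_nsmul_hasFormalParam hW h hw hp n
  rw [e]
  exact some_ne_zero h'

end FormalGroup

namespace E₁

open WeierstrassCurve.Affine WeierstrassCurve.Affine.Point

variable {q : ℂ}

local notation "κ" => (RatFunc.C q : RatFunc ℂ)
local notation "τ" => (RatFunc.X : RatFunc ℂ)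

lemma a₁_eq : (E₁ q).a₁ = 1 - (κ + 1) * τ := by
  simp [E₁]

lemma a₂_eq : (E₁ q).a₂ = -(κ * τ) := by
  simp [E₁]

lemma a₃_eq : (E₁ q).a₃ = κ * τ * (τ - 1) := by
  simp [E₁]

lemma a₄_eq : (E₁ q).a₄ = 0 := rfl

lemma a₆_eq : (E₁ q).a₆ = 0 := rfl

lemma Δ_eq : (E₁ q).Δ = τ ^ 5 * κ ^ 4 * ((1 - κ) + (16 * κ - 4 - 11 * κ ^ 2) * τ
    + (6 - 26 * κ + 25 * κ ^ 2 + κ ^ 3) * τ ^ 2 + (8 * κ - 4 - 17 * κ ^ 2 - 2 * κ ^ 3) * τ ^ 3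
    + (1 + 3 * κ + 3 * κ ^ 2 + κ ^ 3) * τ ^ 4) := by
  simp only [WeierstrassCurve.Δ, WeierstrassCurve.b₂, WeierstrassCurve.b₄, WeierstrassCurve.b₆,
    WeierstrassCurve.b₈, a₁_eq, a₂_eq, a₃_eq, a₄_eq, a₆_eq]
  ring

lemma Δ_ne_zero (hq0 : q ≠ 0) (hq1 : q ≠ 1) : (E₁ q).Δ ≠ 0 := by
  rw [Δ_eq]
  refine mul_ne_zero (mul_ne_zero (pow_ne_zero _ RatFunc.X_ne_zero)
    (pow_ne_zero _ (RatFunc.C_ne_zero hq0))) ?_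
  convert algebraMap_ne_zero_of_eval_ne_zero (p := (1 - C q) + (16 * C q - 4 - 11 * C q ^ 2) * X
    + (6 - 26 * C q + 25 * C q ^ 2 + C q ^ 3) * X ^ 2
    + (8 * C q - 4 - 17 * C q ^ 2 - 2 * C q ^ 3) * X ^ 3
    + (1 + 3 * C q + 3 * C q ^ 2 + C q ^ 3) * X ^ 4) (z := 0) ?_
  · simp [map_ofNat]
  · simpa [sub_eq_zero] using hq1.symm

lemma equation_zero : (E₁ q).Equation 0 0 := by
  simp [equation_iff, E₁]

variable (q) in
noncomputable def denom₇ : ℂ[X] := C q * (X - 1) + 1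

variable (q) in
noncomputable def x₇ : RatFunc ℂ :=
  algebraMap ℂ[X] (RatFunc ℂ) (C q * (C q - 1) * X * (X - 1) * (X - C q + 1)) /
    algebraMap ℂ[X] (RatFunc ℂ) (denom₇ q) ^ 2

variable (q) in
noncomputable def y₇ : RatFunc ℂ :=
  algebraMap ℂ[X] (RatFunc ℂ) (C q * (C q - 1) ^ 2 * X ^ 2 * (-(C q * (C q - 1))
    + (2 * C q ^ 2 - 2 * C q + 1) * X - (C q ^ 2 - C q + 1) * X ^ 2)) /
    algebraMap ℂ[X] (RatFunc ℂ) (denom₇ q) ^ 3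

lemma denom₇_eq (hq0 : q ≠ 0) : denom₇ q = C q * (X - C ((q - 1) / q)) := by
  rw [denom₇, mul_sub, mul_sub, ← C_mul, mul_div_cancel₀ _ hq0, C_sub, C_1]
  ring

lemma isIntegralAt (t : ℂ) : (E₁ q).IsIntegralAt t :=
  ⟨⟨_, hasLeadingTerm_algebraMap _⟩, ⟨_, hasLeadingTerm_algebraMap _⟩,
    ⟨_, hasLeadingTerm_algebraMap _⟩, ⟨0, hasLeadingTerm_zero⟩, ⟨0, hasLeadingTerm_zero⟩⟩

lemma hasFormalParam_seven (hq0 : q ≠ 0) (hq1 : q ≠ 1) :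
    HasFormalParam ((q - 1) / q) (-(q / (q - 1)) ^ 2) (x₇ q) (y₇ q) := by
  have hq1' : q - 1 ≠ 0 := sub_ne_zero.mpr hq1
  have hd : HasLeadingTerm ((q - 1) / q) 1 q (algebraMap ℂ[X] (RatFunc ℂ) (denom₇ q)) := by
    simpa only [denom₇_eq hq0, map_mul, map_sub, RatFunc.algebraMap_C, RatFunc.algebraMap_X,
      mul_one, zero_add] using (hasLeadingTerm_C q).mul hasLeadingTerm_X_sub_C
  refine ⟨((hasLeadingTerm_algebraMap _).div (hd.pow 2) (pow_ne_zero 2 hq0)).of_eq ?_ rfl,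
    ((hasLeadingTerm_algebraMap _).div (hd.pow 3) (pow_ne_zero 3 hq0)).of_eq ?_ rfl⟩ <;>
  simp only [eval_add, eval_sub, eval_neg, eval_mul, eval_pow, eval_C, eval_X, eval_one,
    eval_ofNat, even_two, Even.neg_pow] <;>
  field_simp <;>
  ring

variable [DecidableEq (RatFunc ℂ)]

lemma exists_P_add_P (hq0 : q ≠ 0) (hP : (E₁ q).Nonsingular 0 0) :
    ∃ h : (E₁ q).Nonsingular (κ * τ) (κ ^ 2 * τ ^ 2), some _ _ hP + some _ _ hP = some _ _ h := by
  have hy : (0 : RatFunc ℂ) ≠ (E₁ q).negY 0 0 := by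
    rw [negY, a₃_eq]
    have hτ₁ : τ - 1 ≠ 0 := by simpa using RatFunc.X_sub_C_ne_zero (1 : ℂ)
    simpa using mul_ne_zero (mul_ne_zero (RatFunc.C_ne_zero hq0) RatFunc.X_ne_zero) hτ₁
  have hℓ : (E₁ q).slope 0 0 0 0 = 0 := by
    rw [slope_of_Y_ne rfl hy]
    simp [E₁]
  refine exists_some_add_some_eq hP hP (fun h ↦ hy h.2) ?_ ?_
  · rw [hℓ, addX, a₁_eq, a₂_eq]; ring
  · rw [hℓ, addY, negAddY, addX, negY, a₁_eq, a₂_eq, a₃_eq]; ring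

lemma exists_two_P_add_P (hq0 : q ≠ 0) {hP : (E₁ q).Nonsingular 0 0}
    (h₂ : (E₁ q).Nonsingular (κ * τ) (κ ^ 2 * τ ^ 2)) :
    ∃ h : (E₁ q).Nonsingular (κ * τ * (1 - τ)) (κ * τ ^ 2 * (1 - τ)),
      some _ _ h₂ + some _ _ hP = some _ _ h := by
  have hx : κ * τ ≠ 0 := mul_ne_zero (RatFunc.C_ne_zero hq0) RatFunc.X_ne_zero
  have hℓ : (E₁ q).slope (κ * τ) 0 (κ ^ 2 * τ ^ 2) 0 = κ * τ := by
    rw [slope_of_X_ne hx, sub_zero, sub_zero, div_eq_iff hx]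
    ring
  refine exists_some_add_some_eq h₂ hP (fun h ↦ hx h.1) ?_ ?_
  · rw [hℓ, addX, a₁_eq, a₂_eq]; ring
  · rw [hℓ, addY, negAddY, addX, negY, a₁_eq, a₂_eq, a₃_eq]; ring

lemma exists_two_P_add_two_P (hq0 : q ≠ 0) (h₂ : (E₁ q).Nonsingular (κ * τ) (κ ^ 2 * τ ^ 2)) :
    ∃ h : (E₁ q).Nonsingular τ ((κ - 1) * τ), some _ _ h₂ + some _ _ h₂ = some _ _ h := by
  have hdy : κ ^ 2 * τ ^ 2 - (E₁ q).negY (κ * τ) (κ ^ 2 * τ ^ 2) = κ ^ 2 * τ ^ 2 := by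
    rw [negY, a₁_eq, a₃_eq]; ring
  have hy : κ ^ 2 * τ ^ 2 ≠ (E₁ q).negY (κ * τ) (κ ^ 2 * τ ^ 2) := sub_ne_zero.mp <| by
    rw [hdy]
    exact mul_ne_zero (pow_ne_zero 2 (RatFunc.C_ne_zero hq0)) (pow_ne_zero 2 RatFunc.X_ne_zero)
  have hℓ : (E₁ q).slope (κ * τ) (κ * τ) (κ ^ 2 * τ ^ 2) (κ ^ 2 * τ ^ 2) = (κ + 1) * τ := by
    rw [slope_of_Y_ne rfl hy, hdy, a₁_eq, a₂_eq, a₄_eq]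
    have := RatFunc.C_ne_zero hq0
    have := RatFunc.X_ne_zero (K := ℂ)
    field_simp
    ring
  refine exists_some_add_some_eq h₂ h₂ (fun h ↦ hy h.2) ?_ ?_
  · rw [hℓ, addX, a₁_eq, a₂_eq]; ring
  · rw [hℓ, addY, negAddY, addX, negY, a₁_eq, a₂_eq, a₃_eq]; ring

lemma exists_three_P_add_four_P
    {h₃ : (E₁ q).Nonsingular (κ * τ * (1 - τ)) (κ * τ ^ 2 * (1 - τ))}
    {h₄ : (E₁ q).Nonsingular τ ((κ - 1) * τ)} :
    ∃ h : (E₁ q).Nonsingular (x₇ q) (y₇ q), some _ _ h₃ + some _ _ h₄ = some _ _ h := by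
  have hd : κ * (τ - 1) + 1 ≠ 0 := by
    simpa [denom₇] using
      algebraMap_ne_zero_of_eval_ne_zero (p := denom₇ q) (z := 1) (by simp [denom₇])
  have hx : κ * τ * (1 - τ) ≠ τ := sub_ne_zero.mp <| by
    rw [show κ * τ * (1 - τ) - τ = -(τ * (κ * (τ - 1) + 1)) by ring]
    exact neg_ne_zero.mpr (mul_ne_zero RatFunc.X_ne_zero hd)
  have hℓ : (E₁ q).slope (κ * τ * (1 - τ)) τ (κ * τ ^ 2 * (1 - τ)) ((κ - 1) * τ) =
      (κ * τ ^ 2 - κ * τ + κ - 1) / (κ * (τ - 1) + 1) := by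
    rw [slope_of_X_ne hx, div_eq_div_iff (sub_ne_zero.mpr hx) hd]
    ring
  refine exists_some_add_some_eq h₃ h₄ (fun h ↦ hx h.1) ?_ ?_
  · rw [hℓ, addX, a₁_eq, a₂_eq, x₇]
    simp only [denom₇, map_add, map_sub, map_mul, map_one, RatFunc.algebraMap_C,
      RatFunc.algebraMap_X]
    field_simp
    ring
  · rw [hℓ, addY, negAddY, addX, negY, a₁_eq, a₂_eq, a₃_eq, y₇]
    simp only [denom₇, map_add, map_sub, map_mul, map_neg, map_one, map_pow, map_ofNat,
      RatFunc.algebraMap_C, RatFunc.algebraMap_X]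
    field_simp
    ring

lemma exists_seven_smul_P (hq0 : q ≠ 0) (hP : (E₁ q).Nonsingular 0 0) :
    ∃ h : (E₁ q).Nonsingular (x₇ q) (y₇ q), 7 • some _ _ hP = some _ _ h := by
  obtain ⟨h₂, e₂⟩ := exists_P_add_P hq0 hP
  obtain ⟨h₃, e₃⟩ := exists_two_P_add_P hq0 (hP := hP) h₂
  obtain ⟨h₄, e₄⟩ := exists_two_P_add_two_P hq0 h₂
  obtain ⟨h₇, e₇⟩ := exists_three_P_add_four_P (h₃ := h₃) (h₄ := h₄)
  refine ⟨h₇, ?_⟩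
  rw [← e₇, ← e₄, ← e₃, ← e₂]
  abel

end E₁

open Classical in
theorem stmt_0 (q : ℂ) (hq0 : q ≠ 0) (hq1 : q ≠ 1) :
    (E₁ q).Δ ≠ 0 ∧ (E₁ q).Equation 0 0 ∧
      ∃ h : (E₁ q).Nonsingular 0 0,
        ∀ k : ℕ, 0 < k →
          k • (WeierstrassCurve.Affine.Point.some 0 0 h) ≠ (0 : (E₁ q).Point) := by
  have hΔ := E₁.Δ_ne_zero hq0 hq1
  have hE : (E₁ q).Equation 0 0 := E₁.equation_zero
  have hP : (E₁ q).Nonsingular 0 0 := ((E₁ q).equation_iff_nonsingular_of_Δ_ne_zero hΔ).mp hE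
  refine ⟨hΔ, hE, hP, fun k hk hkP ↦ ?_⟩
  obtain ⟨h₇, e₇⟩ := E₁.exists_seven_smul_P hq0 hP
  have hw : -(q / (q - 1)) ^ 2 ≠ 0 := by simp [hq0, sub_ne_zero.mpr hq1]
  refine nsmul_some_ne_zero_of_hasFormalParam (E₁.isIntegralAt _) h₇ hw
    (E₁.hasFormalParam_seven hq0 hq1) hk.ne' ?_
  rw [← e₇, smul_comm, hkP]
  exact nsmul_zero 7
end

section
/- For every q ∈ ℂ with q ∉ {0,1} and each m = 1,2,3,4,5,6, the multiple m•P of P = (0,0) on E₁(q) is a nonzero affine point whose coordinates x(mP), y(mP) ∈ ℂ(T) are polynomials in T of degree at most 2 and at most 3 respectively; that is, each of P, 2P, 3P, 4P, 5P, 6P is an integral point of the arithmetic-genus-1 model E₁(q). -/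
/-!
Put `P = (0, 0)` and compute `(m + 1) • P = P + m • P` by the chord-and-tangent law on the model
of `E₁(q)` over `ℂ[T]`. The slope of every chord (and of the tangent at `P`) turns out to be a
polynomial of degree at most `1`, so the addition formulas `x' = ℓ² + a₁ℓ - a₂ - x` and
`y' = -(ℓ + a₁)x' - a₃` keep the coordinates polynomial of degrees at most `2` and `3`.
-/

open Polynomial WeierstrassCurve

/-- `Q` is a nonzero point whose coordinates are polynomials in `T` of degrees
at most `2n` and `3n` respectively: an integral point of the genus-`n` model. -/
def IsIntegralPoint (n : ℕ) {W : WeierstrassCurve.Affine (RatFunc ℂ)}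
    (Q : W.Point) : Prop :=
  ∃ (x y : RatFunc ℂ) (h : W.Nonsingular x y) (px py : Polynomial ℂ),
    Q = WeierstrassCurve.Affine.Point.some x y h ∧
    x = algebraMap (Polynomial ℂ) (RatFunc ℂ) px ∧
    y = algebraMap (Polynomial ℂ) (RatFunc ℂ) py ∧
    px.degree ≤ (2 * n : ℕ) ∧ py.degree ≤ (3 * n : ℕ)

namespace WeierstrassCurve.Affine

variable {R K : Type*} [CommRing R] [Field K] [DecidableEq K]

lemma Point.exists_origin_add_eq_some {W : Affine K} {x y ℓ x' y' : K}
    {h₀ : W.Nonsingular 0 0} {h : W.Nonsingular x y} (hxy : ¬(0 = x ∧ 0 = W.negY x y))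
    (hℓ : W.slope 0 x 0 y = ℓ) (hx' : ℓ ^ 2 + W.a₁ * ℓ - W.a₂ - x = x')
    (hy' : -(ℓ + W.a₁) * x' - W.a₃ = y') :
    ∃ h' : W.Nonsingular x' y',
      Point.some _ _ h₀ + Point.some _ _ h = Point.some _ _ h' := by
  have hX : W.addX 0 x (W.slope 0 x 0 y) = x' := by rw [addX, hℓ, ← hx']; ring
  have hY : W.addY 0 x 0 (W.slope 0 x 0 y) = y' := by
    rw [addY, negY, negAddY, hX, hℓ, ← hy']; ring
  have h' := nonsingular_add h₀ h hxy
  rw [hX, hY] at h'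
  exact ⟨h', by rw [Point.add_some hxy, Point.some.injEq]; exact ⟨hX, hY⟩⟩

variable {W : Affine R} {φ : R →+* K}

-- The tangent at the origin has slope `a₄ / a₃`.
lemma Point.exists_two_nsmul_eq_some_map (h₀ : (W.map φ).Nonsingular 0 0)
    (hφ : Function.Injective φ) {ℓ x' y' : R} (ha₃ : W.a₃ ≠ 0)
    (hℓ : ℓ * W.a₃ = W.a₄)
    (hx' : ℓ ^ 2 + W.a₁ * ℓ - W.a₂ = x') (hy' : -(ℓ + W.a₁) * x' - W.a₃ = y') :
    ∃ h', 2 • Point.some _ _ h₀ = Point.some (φ x') (φ y') h' := by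
  have hy : (0 : K) ≠ (W.map φ).negY 0 0 := by
    simpa [negY] using (map_ne_zero_iff φ hφ).mpr ha₃
  rw [two_nsmul]
  refine Point.exists_origin_add_eq_some (ℓ := φ ℓ) (fun h => hy h.2) ?_ ?_ ?_
  · rw [slope_of_Y_ne rfl hy, div_eq_iff (sub_ne_zero.mpr hy)]
    simp [negY, ← hℓ]
  · simp [← hx']
  · simp [← hy']

lemma Point.exists_succ_nsmul_eq_some_map {h₀ : (W.map φ).Nonsingular 0 0}
    (hφ : Function.Injective φ) {m : ℕ} {x y ℓ x' y' : R}
    {h : (W.map φ).Nonsingular (φ x) (φ y)} (hm : m • Point.some _ _ h₀ = Point.some _ _ h)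
    (hx : x ≠ 0) (hℓ : ℓ * x = y) (hx' : ℓ ^ 2 + W.a₁ * ℓ - W.a₂ - x = x')
    (hy' : -(ℓ + W.a₁) * x' - W.a₃ = y') :
    ∃ h', (m + 1) • Point.some _ _ h₀ = Point.some (φ x') (φ y') h' := by
  have hx₀ : (0 : K) ≠ φ x := ((map_ne_zero_iff φ hφ).mpr hx).symm
  rw [succ_nsmul', hm]
  refine Point.exists_origin_add_eq_some (ℓ := φ ℓ) (fun h => hx₀ h.1) ?_ ?_ ?_
  · rw [slope_of_X_ne hx₀, div_eq_iff (sub_ne_zero.mpr hx₀), ← hℓ, map_mul]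
    ring
  · simp [← hx']
  · simp [← hy']

end WeierstrassCurve.Affine

open WeierstrassCurve.Affine

noncomputable def E₁Poly (q : ℂ) : Affine ℂ[X] where
  a₁ := 1 - (C q + 1) * X
  a₂ := -(C q * X)
  a₃ := C q * X * (X - 1)
  a₄ := 0
  a₆ := 0

lemma E₁_eq_map (q : ℂ) : E₁ q = (E₁Poly q).map (algebraMap ℂ[X] (RatFunc ℂ)) := by
  ext <;> simp [E₁, E₁Poly]

namespace E₁Poly

-- Coordinates of `m • (0, 0)`, meaningful only for `1 ≤ m ≤ 6`.
noncomputable def nsmulCoords (q : ℂ) : ℕ → ℂ[X] × ℂ[X]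
  | 2 => (C q * X, C q ^ 2 * X ^ 2)
  | 3 => (C q * X * (1 - X), C q * X ^ 2 * (1 - X))
  | 4 => (X, (C q - 1) * X)
  | 5 => (C q * (C q - 1) * (1 - X), (1 - X) * (C q ^ 3 * X - C q ^ 2 * (C q - 1)))
  | 6 => let r := C (q / (q - 1)); (r * X * (r * X - 1), r ^ 2 * X ^ 2 * (1 - (r - 1) * X))
  | _ => (0, 0)

lemma natDegree_nsmulCoords_le (q : ℂ) (m : ℕ) :
    (nsmulCoords q m).1.natDegree ≤ 2 ∧ (nsmulCoords q m).2.natDegree ≤ 3 := by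
  unfold nsmulCoords
  split <;> dsimp only <;> constructor <;> compute_degree!

variable {q : ℂ}

lemma a₃_ne_zero (hq0 : q ≠ 0) : (E₁Poly q).a₃ ≠ 0 :=
  mul_ne_zero (mul_ne_zero (C_ne_zero.mpr hq0) X_ne_zero) (X_sub_C_ne_zero 1)

lemma nonsingular_zero (hq0 : q ≠ 0) :
    ((E₁Poly q).map (algebraMap ℂ[X] (RatFunc ℂ))).Nonsingular 0 0 :=
  Affine.nonsingular_zero.mpr ⟨by simp [E₁Poly], Or.inl <|
    (map_ne_zero_iff _ (IsFractionRing.injective ℂ[X] (RatFunc ℂ))).mpr (a₃_ne_zero hq0)⟩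

open Classical in
lemma nsmul_eq_some (hq0 : q ≠ 0) (hq1 : q ≠ 1)
    (h₀ : ((E₁Poly q).map (algebraMap ℂ[X] (RatFunc ℂ))).Nonsingular 0 0) {m : ℕ}
    (hm1 : 1 ≤ m) (hm6 : m ≤ 6) :
    ∃ h, m • Point.some _ _ h₀ =
      Point.some (algebraMap ℂ[X] (RatFunc ℂ) (nsmulCoords q m).1)
        (algebraMap ℂ[X] (RatFunc ℂ) (nsmulCoords q m).2) h := by
  have hφ := IsFractionRing.injective ℂ[X] (RatFunc ℂ)
  have hq : C q ≠ 0 := C_ne_zero.mpr hq0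
  have hq' : C q - 1 ≠ 0 := by rw [← C_1, ← C_sub]; exact C_ne_zero.mpr (sub_ne_zero.mpr hq1)
  have h1X : (1 - X : ℂ[X]) ≠ 0 := sub_ne_zero.mpr (X_ne_C 1).symm
  have hr : C (q / (q - 1)) * (C q - 1) = C q := by
    rw [← C_1, ← C_sub, ← C_mul, div_mul_cancel₀ _ (sub_ne_zero.mpr hq1)]
  obtain ⟨h₂, e₂⟩ := Point.exists_two_nsmul_eq_some_map h₀ hφ (ℓ := 0)
    (x' := (nsmulCoords q 2).1) (y' := (nsmulCoords q 2).2) (a₃_ne_zero hq0)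
    (by simp [E₁Poly]) (by simp [E₁Poly, nsmulCoords])
    (by simp only [E₁Poly, nsmulCoords]; ring)
  obtain ⟨h₃, e₃⟩ := Point.exists_succ_nsmul_eq_some_map hφ e₂ (ℓ := C q * X)
    (x' := (nsmulCoords q 3).1) (y' := (nsmulCoords q 3).2)
    (mul_ne_zero hq X_ne_zero) (by simp only [nsmulCoords]; ring)
    (by simp only [E₁Poly, nsmulCoords]; ring) (by simp only [E₁Poly, nsmulCoords]; ring)
  obtain ⟨h₄, e₄⟩ := Point.exists_succ_nsmul_eq_some_map hφ e₃ (ℓ := X)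
    (x' := (nsmulCoords q 4).1) (y' := (nsmulCoords q 4).2)
    (mul_ne_zero (mul_ne_zero hq X_ne_zero) h1X) (by simp only [nsmulCoords]; ring)
    (by simp only [E₁Poly, nsmulCoords]; ring) (by simp only [E₁Poly, nsmulCoords]; ring)
  obtain ⟨h₅, e₅⟩ := Point.exists_succ_nsmul_eq_some_map hφ e₄ (ℓ := C q - 1)
    (x' := (nsmulCoords q 5).1) (y' := (nsmulCoords q 5).2) X_ne_zero (by simp [nsmulCoords])
    (by simp only [E₁Poly, nsmulCoords]; ring) (by simp only [E₁Poly, nsmulCoords]; ring)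
  obtain ⟨h₆, e₆⟩ := Point.exists_succ_nsmul_eq_some_map hφ e₅
    (ℓ := C (q / (q - 1)) * C q * X - C q)
    (x' := (nsmulCoords q 6).1) (y' := (nsmulCoords q 6).2) (mul_ne_zero (mul_ne_zero hq hq') h1X)
    (by simp only [nsmulCoords]; linear_combination (1 - X) * C q ^ 2 * X * hr)
    (by simp only [E₁Poly, nsmulCoords]
        linear_combination ((-2 * C q - 1) * X + (C q + 1) * C (q / (q - 1)) * X ^ 2) * hr)
    (by simp only [E₁Poly, nsmulCoords]
        linear_combination
          (-X + (2 * C (q / (q - 1)) + 1) * X ^ 2 - C (q / (q - 1)) ^ 2 * X ^ 3) * hr)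
  interval_cases m
  · exact ⟨by simpa [nsmulCoords] using h₀, by rw [one_nsmul]; simp [nsmulCoords]⟩
  exacts [⟨h₂, e₂⟩, ⟨h₃, e₃⟩, ⟨h₄, e₄⟩, ⟨h₅, e₅⟩, ⟨h₆, e₆⟩]

end E₁Poly

open Classical in
theorem stmt_1 (q : ℂ) (hq0 : q ≠ 0) (hq1 : q ≠ 1) :
    ∃ h : (E₁ q).Nonsingular 0 0,
      ∀ m : ℕ, 1 ≤ m → m ≤ 6 →
        IsIntegralPoint 1 (m • (WeierstrassCurve.Affine.Point.some 0 0 h)) := by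
  rw [E₁_eq_map]
  refine ⟨E₁Poly.nonsingular_zero hq0, fun m hm1 hm6 => ?_⟩
  obtain ⟨h, hm⟩ := E₁Poly.nsmul_eq_some hq0 hq1 _ hm1 hm6
  obtain ⟨hx, hy⟩ := E₁Poly.natDegree_nsmulCoords_le q m
  exact ⟨_, _, h, _, _, hm, rfl, rfl, natDegree_le_iff_degree_le.mp hx,
    natDegree_le_iff_degree_le.mp hy⟩
end

section
/- Let E be the elliptic curve over ℚ defined by Y² + XY = X³ − 139761580X + 1587303040400 and let P = (11480, 1217300). Then P lies on E, P has infinite order in E(ℚ) (k•P ≠ O for every positive integer k), and for each m = 1, 2, …, 14 the multiple m•P is a nonzero affine point both of whose coordinates are integers. -/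
/-!
A point of finite order `n` in a group without elements of order two is a double: for odd `n`
it is twice its `(n + 1) / 2`-th multiple, and for even `n = 2m` the point `m • P` would have
order two. On `E14` a rational point of order two has `x` a root of the cubic
`4x³ + b₂x² + 2b₄x + b₆`, and a rational `Q` with `2Q = P` has `x(Q)` a root of
`x⁴ - b₄x² - 2b₆x - b₈ - 11480 (4x³ + b₂x² + 2b₄x + b₆)`. After `x ↦ 4x` for the cubic both
become monic integer polynomials, so a rational root would be an integer, and they have no roots
modulo `17` and `11` respectively. Hence `P` has infinite order. The multiples `2P, …, 14P` are
computed with the chord-tangent formulas.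
-/

open WeierstrassCurve

/-- The elliptic curve `Y² + XY = X³ − 139761580X + 1587303040400` over `ℚ`. -/
def E14 : WeierstrassCurve.Affine ℚ where
  a₁ := 1
  a₂ := 0
  a₃ := 0
  a₄ := -139761580
  a₆ := 1587303040400

open Polynomial WeierstrassCurve.Affine

theorem Polynomial.Monic.aeval_ne_zero_of_forall_zmod {p : ℤ[X]} (hp : p.Monic) {n : ℕ}
    (hn : ∀ t : ZMod n, aeval t p ≠ 0) (x : ℚ) : aeval x p ≠ 0 := by
  intro hx
  obtain ⟨z, rfl⟩ := IsIntegrallyClosed.isIntegral_iff.mp (⟨p, hp, hx⟩ : IsIntegral ℤ x)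
  rw [aeval_algebraMap_apply, map_eq_zero_iff _ (algebraMap ℤ ℚ).injective_int] at hx
  exact hn (algebraMap ℤ (ZMod n) z) (by rw [aeval_algebraMap_apply, hx, map_zero])

theorem not_isOfFinAddOrder_of_forall_add_self_ne {G : Type*} [AddMonoid G] {g : G}
    (htors : ∀ Q : G, Q + Q = 0 → Q = 0) (hg : ∀ Q : G, Q + Q ≠ g) : ¬IsOfFinAddOrder g := by
  intro hfin
  have hn : 0 < addOrderOf g := hfin.addOrderOf_pos
  rcases Nat.even_or_odd' (addOrderOf g) with ⟨m, hm | hm⟩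
  · have hm0 : m • g = 0 :=
      htors _ (by rw [← add_nsmul, ← two_mul, ← hm, addOrderOf_nsmul_eq_zero])
    have := Nat.le_of_dvd (by omega) (addOrderOf_dvd_of_nsmul_eq_zero hm0)
    omega
  · refine hg ((m + 1) • g) ?_
    rw [← add_nsmul, show m + 1 + (m + 1) = addOrderOf g + 1 by omega, succ_nsmul,
      addOrderOf_nsmul_eq_zero, zero_add]

namespace WeierstrassCurve.Affine

variable {R F : Type*} [CommRing R] [Field F] [DecidableEq F]

lemma sq_Y_sub_negY {W : Affine R} {x y : R} (h : W.Equation x y) :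
    (y - W.negY x y) ^ 2 = 4 * x ^ 3 + W.b₂ * x ^ 2 + 2 * W.b₄ * x + W.b₆ := by
  rw [equation_iff] at h
  simp only [negY, b₂, b₄, b₆]
  linear_combination 4 * h

lemma addX_slope_self_mul {W : Affine F} {x y : F} (h : W.Equation x y) (hy : y ≠ W.negY x y) :
    W.addX x x (W.slope x x y y) * (4 * x ^ 3 + W.b₂ * x ^ 2 + 2 * W.b₄ * x + W.b₆) =
      x ^ 4 - W.b₄ * x ^ 2 - 2 * W.b₆ * x - W.b₈ := by
  have hD : y - W.negY x y = 2 * y + W.a₁ * x + W.a₃ := by rw [negY]; ring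
  have hs : W.slope x x y y * (2 * y + W.a₁ * x + W.a₃) =
      3 * x ^ 2 + 2 * W.a₂ * x + W.a₄ - W.a₁ * y := by
    rw [slope_of_Y_ne rfl hy, ← hD, div_mul_cancel₀ _ (sub_ne_zero.mpr hy)]
  rw [← sq_Y_sub_negY h, hD, addX, b₄, b₆, b₈]
  rw [equation_iff] at h
  set s := W.slope x x y y
  linear_combination (s * (2 * y + W.a₁ * x + W.a₃) + 3 * x ^ 2 + 2 * W.a₂ * x + W.a₄ - W.a₁ * y +
    W.a₁ * (2 * y + W.a₁ * x + W.a₃)) * hs - (W.a₁ ^ 2 + 4 * W.a₂ + 8 * x) * h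

def IsAddCoords (W : Affine F) (p₁ p₂ p₃ : F × F) : Prop :=
  ¬(p₁.1 = p₂.1 ∧ p₁.2 = W.negY p₂.1 p₂.2) ∧
    W.addX p₁.1 p₂.1 (W.slope p₁.1 p₂.1 p₁.2 p₂.2) = p₃.1 ∧
    W.addY p₁.1 p₂.1 p₁.2 (W.slope p₁.1 p₂.1 p₁.2 p₂.2) = p₃.2

namespace Point

variable {W : Affine F}

lemma some_add_some_of_isAddCoords {x₁ y₁ x₂ y₂ x₃ y₃ : F}
    {h₁ : W.Nonsingular x₁ y₁} {h₂ : W.Nonsingular x₂ y₂} {h₃ : W.Nonsingular x₃ y₃}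
    (h : W.IsAddCoords (x₁, y₁) (x₂, y₂) (x₃, y₃)) : some _ _ h₁ + some _ _ h₂ = some _ _ h₃ := by
  obtain ⟨hxy, rfl, rfl⟩ := h
  exact add_some hxy

lemma eq_zero_of_add_self_eq_zero
    (hW : ∀ x : F, 4 * x ^ 3 + W.b₂ * x ^ 2 + 2 * W.b₄ * x + W.b₆ ≠ 0) {Q : W.Point}
    (hQ : Q + Q = 0) : Q = 0 := by
  rcases Q with _ | ⟨x, y, h⟩
  · rfl
  by_cases hy : y = W.negY x y
  · exact absurd (by rw [← sq_Y_sub_negY h.1, sub_eq_zero.mpr hy, zero_pow two_ne_zero]) (hW x)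
  · rw [add_self_of_Y_ne hy] at hQ
    exact absurd hQ (some_ne_zero _)

lemma add_self_ne_some {x₀ y₀ : F} (h₀ : W.Nonsingular x₀ y₀)
    (hW : ∀ x : F, x ^ 4 - W.b₄ * x ^ 2 - 2 * W.b₆ * x - W.b₈ -
      x₀ * (4 * x ^ 3 + W.b₂ * x ^ 2 + 2 * W.b₄ * x + W.b₆) ≠ 0) (Q : W.Point) :
    Q + Q ≠ some _ _ h₀ := by
  rcases Q with _ | ⟨x, y, h⟩
  · exact (some_ne_zero h₀).symm
  by_cases hy : y = W.negY x y
  · rw [add_self_of_Y_eq hy]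
    exact (some_ne_zero h₀).symm
  · rw [add_self_of_Y_ne hy]
    intro hQ
    rw [some.injEq] at hQ
    apply hW x
    rw [← addX_slope_self_mul h.1 hy, hQ.1, sub_self]

end Point

end WeierstrassCurve.Affine

namespace E14

lemma twoTorsionCubic_ne_zero (x : ℚ) :
    4 * x ^ 3 + E14.b₂ * x ^ 2 + 2 * E14.b₄ * x + E14.b₆ ≠ 0 := by
  have hp : (X ^ 3 + X ^ 2 - 2236185280 * X + 101587394585600 : ℤ[X]).Monic := by monicity!
  have := hp.aeval_ne_zero_of_forall_zmod (n := 17) (by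
    simp only [map_add, map_sub, map_mul, map_pow, aeval_X, map_ofNat]
    decide) (4 * x)
  simp only [map_add, map_sub, map_mul, map_pow, aeval_X, map_ofNat] at this
  norm_num [E14, b₂, b₄, b₆]
  contrapose! this
  linear_combination 16 * this

lemma halvingQuartic_ne_zero (x : ℚ) :
    x ^ 4 - E14.b₄ * x ^ 2 - 2 * E14.b₆ * x - E14.b₈ -
      11480 * (4 * x ^ 3 + E14.b₂ * x ^ 2 + 2 * E14.b₄ * x + E14.b₆) ≠ 0 := by
  have hp : (X ^ 4 - 45920 * X ^ 3 + 279511680 * X ^ 2 - 6280572569600 * X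
      - 53357243674112000 : ℤ[X]).Monic := by monicity!
  have := hp.aeval_ne_zero_of_forall_zmod (n := 11) (by
    simp only [map_add, map_sub, map_mul, map_pow, aeval_X, map_ofNat]
    decide) x
  simp only [map_add, map_sub, map_mul, map_pow, aeval_X, map_ofNat] at this
  norm_num [E14, b₂, b₄, b₆, b₈]
  contrapose! this
  linear_combination this

lemma nonsingular_P : E14.Nonsingular 11480 1217300 := by
  rw [nonsingular_iff, equation_iff]
  norm_num [E14, negY]

lemma not_isOfFinAddOrder_P : ¬IsOfFinAddOrder (Point.some _ _ nonsingular_P) :=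
  not_isOfFinAddOrder_of_forall_add_self_ne
    (fun _ => Point.eq_zero_of_add_self_eq_zero twoTorsionCubic_ne_zero)
    (Point.add_self_ne_some nonsingular_P halvingQuartic_ne_zero)

-- `multiplesP[i]` holds the coordinates of `(i + 1) • P`.
def multiplesP : List (ℤ × ℤ) :=
  [(11480, 1217300), (-12040, 1240820), (560, -1228780), (38360, -7276780), (49700, 10810520),
    (2072, 1142036), (-13480, -1004140), (10010, -1096480), (2457560, -3853804780),
    (13160, 1417220), (-10360, 1392020), (-1064, -1316588), (30590, -5108110),
    (67160, 17145620)]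

lemma nonsingular_of_mem_multiplesP {c : ℤ × ℤ} (hc : c ∈ multiplesP) :
    E14.Nonsingular c.1 c.2 := by
  simp only [multiplesP, List.mem_cons, List.not_mem_nil, or_false] at hc
  rw [nonsingular_iff, equation_iff]
  rcases hc with rfl | rfl | rfl | rfl | rfl | rfl | rfl | rfl | rfl | rfl | rfl | rfl | rfl | rfl <;>
    norm_num [E14, negY]

lemma isChain_multiplesP :
    multiplesP.IsChain fun c d => E14.IsAddCoords (c.1, c.2) (11480, 1217300) (d.1, d.2) := by
  simp only [multiplesP, List.isChain_cons_cons, List.isChain_singleton, and_true]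
  norm_num [IsAddCoords, E14, negY, addX, addY, negAddY, Affine.slope]

lemma nsmul_P (i : ℕ) (hi : i < multiplesP.length) :
    (i + 1) • Point.some _ _ nonsingular_P =
      Point.some _ _ (nonsingular_of_mem_multiplesP (List.getElem_mem hi)) := by
  induction i with
  | zero => simp [multiplesP]
  | succ i ih =>
    rw [succ_nsmul, ih (by omega)]
    exact Point.some_add_some_of_isAddCoords (List.isChain_iff_getElem.mp isChain_multiplesP i hi)

end E14

theorem stmt_8 :
    ∃ h : E14.Nonsingular 11480 1217300,
      (∀ k : ℕ, 0 < k →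
        k • (WeierstrassCurve.Affine.Point.some _ _ h) ≠ (0 : E14.Point)) ∧
      (∀ m : ℕ, 1 ≤ m → m ≤ 14 →
        ∃ (x y : ℚ) (h' : E14.Nonsingular x y) (a b : ℤ),
          m • (WeierstrassCurve.Affine.Point.some _ _ h)
            = WeierstrassCurve.Affine.Point.some _ _ h' ∧
          x = (a : ℚ) ∧ y = (b : ℚ)) := by
  refine ⟨E14.nonsingular_P, fun k hk hkP => ?_, fun m hm1 hm14 => ?_⟩
  · exact E14.not_isOfFinAddOrder_P (isOfFinAddOrder_iff_nsmul_eq_zero.mpr ⟨k, hk, hkP⟩)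
  · obtain ⟨i, rfl⟩ := Nat.exists_eq_add_of_le' hm1
    exact ⟨_, _, _, _, _, E14.nsmul_P i (show i < 14 by omega), rfl, rfl⟩
end

section
/- If (S, H) is admissible and d(S) = 12, then H ≥ 1/30; moreover H = 1/30 holds if and only if h_m(S,H) = 0 for every m with 1 ≤ m ≤ 6. -/
/-- The periodized second Bernoulli polynomial `B(x) = {x}² − {x} + 1/6`. -/
def bernB (x : ℚ) : ℚ := Int.fract x ^ 2 - Int.fract x + 1 / 6

/-- `d(S) = Σ_{z ∈ S} den(z)`: the sum of the denominators (in lowest terms)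
of the elements of the multiset `S`. -/
def dS (S : Multiset ℚ) : ℕ := (S.map fun z => z.den).sum

/-- `λ_m(S) = Σ_{z ∈ S} den(z)·B(m·z)`. -/
def lamS (m : ℕ) (S : Multiset ℚ) : ℚ :=
  (S.map fun z => (z.den : ℚ) * bernB (m * z)).sum

/-- `h_m(S,H) = m²·H − λ_m(S)`. -/
def hS (m : ℕ) (S : Multiset ℚ) (H : ℚ) : ℚ := (m : ℚ) ^ 2 * H - lamS m S

/-- `(S, H)` is admissible: `S` is a multiset of rationals in `[0, 1/2]`, `H > 0`,
each `h_m(S,H)` is a nonnegative even integer, and `h_{m′}(S,H) ≤ h_m(S,H)`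
whenever `m′ ∣ m`. -/
def Admissible (S : Multiset ℚ) (H : ℚ) : Prop :=
  (∀ z ∈ S, 0 ≤ z ∧ z ≤ 1 / 2) ∧ 0 < H ∧
  (∀ m : ℕ, 0 < m → ∃ k : ℕ, hS m S H = 2 * k) ∧
  (∀ m m' : ℕ, 0 < m' → 0 < m → m' ∣ m → hS m' S H ≤ hS m S H)

/-- The Möbius condition: `Σ_{m′ ∣ m} μ(m/m′)·h_{m′}(S,H) ≥ 0` for all `m ≥ 1`. -/
def MoebiusCond (S : Multiset ℚ) (H : ℚ) : Prop :=
  ∀ m : ℕ, 0 < m →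
    0 ≤ ∑ m' ∈ m.divisors, (ArithmeticFunction.moebius (m / m') : ℚ) * hS m' S H

/-!
Since `B ≥ -1/12`, we have `λ_m(S) ≥ -d(S)/12 = -1`, so `h_m ≤ m²H + 1`. If `H ≤ 1/30` this is
below `2` for `m ≤ 5`, and evenness forces `h_1 = ⋯ = h_5 = 0`, i.e. `λ_m(S) = m²H` for `m ≤ 5`.
Every element of `S` is a fraction in `[0, 1/2]` with denominator at most `12`, so `S` is one of
finitely many multisets; a kernel computation shows that `λ_m = m²λ_1 > 0` for `m ≤ 5` happens
only for `S = {0, 0, 1/5, 1/3, 1/2}`, with `λ_1 = 1/30` and `h_6 = 0`, and for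
`S = {0, 0, 0, 1/4, 2/5}`, with `λ_1 = 1/20` and `h_6 = 2`. The second configuration is
incompatible both with `H ≤ 1/30` and with `h_6 = 0`.
-/

theorem neg_one_twelfth_le_bernB (x : ℚ) : -(1 / 12) ≤ bernB x := by
  unfold bernB
  nlinarith [sq_nonneg (Int.fract x - 1 / 2)]

theorem den_le_dS {S : Multiset ℚ} {z : ℚ} (hz : z ∈ S) : z.den ≤ dS S :=
  Multiset.le_sum_of_mem (Multiset.mem_map_of_mem _ hz)

theorem dS_add (S T : Multiset ℚ) : dS (S + T) = dS S + dS T := by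
  simp [dS]

theorem dS_replicate (k : ℕ) (z : ℚ) : dS (Multiset.replicate k z) = k * z.den := by
  simp [dS]

theorem neg_dS_div_twelve_le_lamS (m : ℕ) (S : Multiset ℚ) : -(dS S : ℚ) / 12 ≤ lamS m S := by
  have hsum : -(dS S : ℚ) / 12 = (S.map fun z => (z.den : ℚ) * -(1 / 12)).sum := by
    simp [dS, Multiset.sum_map_mul_right, Nat.cast_multiset_sum, div_eq_mul_inv]
  rw [hsum, lamS]
  exact Multiset.sum_map_le_sum_map _ _ fun z _ =>
    mul_le_mul_of_nonneg_left (neg_one_twelfth_le_bernB _) (Nat.cast_nonneg _)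

theorem Admissible.hS_eq_zero {S : Multiset ℚ} {H : ℚ} (hadm : Admissible S H)
    (hd : dS S = 12) (hH : H ≤ 1 / 30) {m : ℕ} (hm1 : 1 ≤ m) (hm5 : m ≤ 5) :
    hS m S H = 0 := by
  obtain ⟨k, hk⟩ := hadm.2.2.1 m hm1
  have hlt : hS m S H < 2 := by
    have hlam := neg_dS_div_twelve_le_lamS m S
    have hm : (m : ℚ) ^ 2 ≤ 25 := by exact_mod_cast Nat.pow_le_pow_left hm5 2
    rw [hd] at hlam
    unfold hS
    nlinarith [hadm.2.1]
  obtain rfl : k = 0 := by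
    have : (k : ℚ) < 1 := by linarith
    exact Nat.lt_one_iff.mp (by exact_mod_cast this)
  simpa using hk

def smallFractions (N : ℕ) : List ℚ :=
  ((List.range (N + 1)).flatMap fun q : ℕ =>
    (List.range (q / 2 + 1)).map fun n : ℕ => (n / q : ℚ)).dedup

theorem mem_smallFractions {N : ℕ} {z : ℚ} (h0 : 0 ≤ z) (h1 : z ≤ 1 / 2) (hN : z.den ≤ N) :
    z ∈ smallFractions N := by
  have hz : ((z.num.toNat : ℕ) : ℚ) / z.den = z := by
    rw [← Int.cast_natCast, Int.toNat_of_nonneg (Rat.num_nonneg.mpr h0), Rat.num_div_den]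
  have htwice : 2 * z.num.toNat ≤ z.den := by
    have : (2 * z.num.toNat : ℚ) ≤ z.den := by
      rw [← hz, div_le_iff₀ (by exact_mod_cast z.pos)] at h1
      linarith
    exact_mod_cast this
  simp only [smallFractions, List.mem_dedup, List.mem_flatMap, List.mem_range, List.mem_map]
  exact ⟨z.den, by omega, z.num.toNat, by omega, hz⟩

def denSumMultisets : List ℚ → ℕ → List (Multiset ℚ)
  | [], n => if n = 0 then [0] else []
  | z :: L, n => (List.range (n / z.den + 1)).flatMap fun k =>
      (denSumMultisets L (n - k * z.den)).map (Multiset.replicate k z + ·)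

theorem mem_denSumMultisets : ∀ (L : List ℚ) (S : Multiset ℚ), (∀ z ∈ S, z ∈ L) →
    S ∈ denSumMultisets L (dS S)
  | [], S, hS => by
    obtain rfl : S = 0 := Multiset.eq_zero_of_forall_notMem fun z hz => by simpa using hS z hz
    simp [denSumMultisets, dS]
  | z :: L, S, hS => by
    have hsplit : Multiset.replicate (S.count z) z + S.filter (· ≠ z) = S := by
      rw [← Multiset.filter_eq', Multiset.filter_add_not]
    have hrest : S.filter (· ≠ z) ∈ denSumMultisets L (dS (S.filter (· ≠ z))) :=
      mem_denSumMultisets L _ fun y hy => by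
        obtain ⟨hyS, hyz⟩ := Multiset.mem_filter.mp hy
        simpa [hyz] using hS y hyS
    have hd : dS S = S.count z * z.den + dS (S.filter (· ≠ z)) := by
      rw [← dS_replicate, ← dS_add, hsplit]
    simp only [denSumMultisets, List.mem_flatMap, List.mem_range, List.mem_map]
    refine ⟨S.count z, ?_, _, by rwa [hd, Nat.add_sub_cancel_left], hsplit⟩
    rw [Nat.lt_succ_iff, Nat.le_div_iff_mul_le z.pos]
    omega

theorem lamS_of_mem_denSumMultisets_twelve : ∀ S ∈ denSumMultisets (smallFractions 12) 12,
    0 < lamS 1 S → (∀ m ∈ Finset.Icc 1 5, lamS m S = m ^ 2 * lamS 1 S) →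
    (lamS 1 S = 1 / 30 ∧ lamS 6 S = 36 * lamS 1 S) ∨
    (lamS 1 S = 1 / 20 ∧ lamS 6 S = 36 * lamS 1 S - 2) := by
  decide +kernel

theorem hS_six_of_hS_eq_zero {S : Multiset ℚ} {H : ℚ} (hrange : ∀ z ∈ S, 0 ≤ z ∧ z ≤ 1 / 2)
    (hd : dS S = 12) (hH : 0 < H) (hzero : ∀ m : ℕ, 1 ≤ m → m ≤ 5 → hS m S H = 0) :
    (H = 1 / 30 ∧ hS 6 S H = 0) ∨ (H = 1 / 20 ∧ hS 6 S H = 2) := by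
  have hmem : S ∈ denSumMultisets (smallFractions 12) 12 := hd ▸
    mem_denSumMultisets _ S fun z hz =>
      mem_smallFractions (hrange z hz).1 (hrange z hz).2 (hd ▸ den_le_dS hz)
  have hlam : ∀ m ∈ Finset.Icc 1 5, lamS m S = m ^ 2 * H := fun m hm => by
    have := hzero m (Finset.mem_Icc.mp hm).1 (Finset.mem_Icc.mp hm).2
    unfold hS at this
    linarith
  have hlam1 : lamS 1 S = H := by simpa using hlam 1 (by decide)
  have hcases := lamS_of_mem_denSumMultisets_twelve S hmem (hlam1 ▸ hH) (hlam1 ▸ hlam)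
  rw [hlam1] at hcases
  unfold hS
  rcases hcases with ⟨h1, h6⟩ | ⟨h1, h6⟩
  · exact Or.inl ⟨h1, by rw [h6]; norm_num⟩
  · exact Or.inr ⟨h1, by rw [h6]; norm_num⟩

theorem stmt_13 (S : Multiset ℚ) (H : ℚ) (hadm : Admissible S H)
    (hd : dS S = 12) :
    1 / 30 ≤ H ∧ (H = 1 / 30 ↔ ∀ m : ℕ, 1 ≤ m → m ≤ 6 → hS m S H = 0) := by
  have hzero (hH : H ≤ 1 / 30) : ∀ m : ℕ, 1 ≤ m → m ≤ 5 → hS m S H = 0 :=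
    fun _ hm1 hm5 => hadm.hS_eq_zero hd hH hm1 hm5
  have hcases := hS_six_of_hS_eq_zero hadm.1 hd hadm.2.1
  refine ⟨?_, fun hH m hm1 hm6 => ?_, fun hall => ?_⟩
  · by_contra! hlt
    rcases hcases (hzero hlt.le) with ⟨h, -⟩ | ⟨h, -⟩ <;> linarith
  · rcases hcases (hzero hH.le) with ⟨-, h6⟩ | ⟨h, -⟩
    · rcases (show m ≤ 5 ∨ m = 6 by omega) with hm5 | rfl
      · exact hzero hH.le m hm1 hm5
      · exact h6
    · linarith
  · rcases hcases (fun m hm1 hm5 => hall m hm1 (by omega)) with ⟨h, -⟩ | ⟨-, h6⟩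
    · exact h
    · linarith [hall 6 (by norm_num) le_rfl]
end

section
/- If (S, H) is admissible with d(S) = 24 and h_m(S,H) = 0 for every m with 1 ≤ m ≤ 8, then H = 11/420 and S is the multiset {1/7, 2/5, 1/4, 1/3, 1/2, 0, 0, 0}. -/
/-!
For `z = a / q` in lowest terms and `r = m a mod q` one has `q B(m z) = q / 6 - r (q - r) / q`,
so with `d(S) = 24` the conditions `h_m = 0` say that the defect sums `W_m = Σ r (q - r) / q`
equal `4 - m² H` for `m ≤ 8`. Each element contributes at most `q / 4` to every `W_m`, and
`W_8 ≥ 0` forces `H ≤ 1 / 16`; these bounds prune a branch-and-bound enumeration of all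
multisets of fractions `a / q ∈ [0, 1/2]` with `Σ q = 24` enough to make it a short computation.
Only one multiset survives. Scaling by `lcm(1, …, 24)` keeps the enumeration in `ℕ`.
-/

section BoundedSearch

variable {α V : Type*} [AddCommMonoid V] (size : α → ℕ) (vec : α → V)
  (Feasible : ℕ → V → Prop) [∀ n, DecidablePred (Feasible n)]
  (Accept : V → Prop) [DecidablePred Accept]

/-- The lists `replicate k₁ c₁ ++ replicate k₂ c₂ ++ ⋯` over `cs = [c₁, c₂, …]` of total size
`rem` whose vector sum, added to `s`, satisfies `Accept`; a branch is cut as soon as its partial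
state fails `Feasible`. -/
def boundedSearch : List α → ℕ → V → List (List α)
  | [], rem, s => if rem = 0 ∧ Accept s then [[]] else []
  | c :: cs, rem, s =>
    (List.range (rem / size c + 1)).flatMap fun k =>
      if Feasible (rem - k * size c) (s + k • vec c) then
        (boundedSearch cs (rem - k * size c) (s + k • vec c)).map (List.replicate k c ++ ·)
      else []

variable {size vec Feasible Accept}

theorem exists_mem_boundedSearch
    (hFeasible : ∀ s (T : Multiset α), Accept (s + (T.map vec).sum) → Feasible (T.map size).sum s)
    (cs : List α) (hcs : ∀ c ∈ cs, 0 < size c) (s : V) (T : Multiset α) (hT : ∀ x ∈ T, x ∈ cs)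
    (hAccept : Accept (s + (T.map vec).sum)) :
    ∃ X ∈ boundedSearch size vec Feasible Accept cs (T.map size).sum s, (X : Multiset α) = T := by
  classical
  induction cs generalizing s T with
  | nil =>
    obtain rfl : T = 0 := Multiset.eq_zero_of_forall_notMem fun x hx => by simpa using hT x hx
    refine ⟨[], ?_, rfl⟩
    simp_all [boundedSearch]
  | cons c cs ih =>
    set T' := T.filter (· ≠ c)
    have hsplit : Multiset.replicate (T.count c) c + T' = T := by
      rw [← Multiset.filter_eq', Multiset.filter_add_not]
    have hT' : ∀ x ∈ T', x ∈ cs := fun x hx => by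
      obtain ⟨hxT, hxc⟩ := Multiset.mem_filter.mp hx
      exact (List.mem_cons.mp (hT x hxT)).resolve_left hxc
    set s' := s + T.count c • vec c
    have hAccept' : Accept (s' + (T'.map vec).sum) := by
      rwa [add_assoc, ← Multiset.sum_replicate, ← Multiset.map_replicate, ← Multiset.sum_add,
        ← Multiset.map_add, hsplit]
    have hsize : (T.map size).sum = T.count c * size c + (T'.map size).sum := by
      conv_lhs => rw [← hsplit]
      rw [Multiset.map_add, Multiset.sum_add, Multiset.map_replicate, Multiset.sum_replicate,
        smul_eq_mul]
    obtain ⟨X, hX, hXT'⟩ := ih (fun c' hc' => hcs c' (List.mem_cons_of_mem c hc')) s' T' hT' hAccept'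
    refine ⟨List.replicate (T.count c) c ++ X, ?_,
      by rw [← Multiset.coe_add, hXT', Multiset.coe_replicate, hsplit]⟩
    have hcount : T.count c ≤ (T.map size).sum / size c := by
      rw [Nat.le_div_iff_mul_le (hcs c List.mem_cons_self)]
      omega
    have hrem : (T.map size).sum - T.count c * size c = (T'.map size).sum := by
      omega
    simp only [boundedSearch, List.mem_flatMap, List.mem_range]
    refine ⟨T.count c, by omega, ?_⟩
    rw [hrem, if_pos (hFeasible s' _ hAccept')]
    exact List.mem_map_of_mem hX

end BoundedSearch

/-- `lcm(1, …, 24)`. -/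
def lcmDen : ℕ := 5354228880

theorem dvd_lcmDen {q : ℕ} (hq : 0 < q) (hq24 : q ≤ 24) : q ∣ lcmDen := by
  have : ∀ q < 25, 0 < q → q ∣ lcmDen := by decide
  exact this q (by omega) hq

/-- For `c = (a, q)`: `lcmDen · r (q - r) / q` with `r = m a mod q`, the amount by which
`q B(m a / q)` falls short of `q / 6`, scaled to an integer. -/
def defect (c : ℕ × ℕ) (m : ℕ) : ℕ :=
  lcmDen / c.2 * (m * c.1 % c.2 * (c.2 - m * c.1 % c.2))

theorem four_mul_defect_le (c : ℕ × ℕ) (m : ℕ) : 4 * defect c m ≤ lcmDen * c.2 := by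
  obtain ⟨a, q⟩ := c
  rcases Nat.eq_zero_or_pos q with rfl | hq
  · simp [defect]
  have hsq : 4 * (m * a % q * (q - m * a % q)) ≤ q * q := by
    generalize hr : m * a % q = r
    have : r < q := hr ▸ Nat.mod_lt _ hq
    zify [this.le]
    nlinarith [sq_nonneg ((q : ℤ) - 2 * r)]
  calc 4 * defect (a, q) m = lcmDen / q * (4 * (m * a % q * (q - m * a % q))) := by
        simp only [defect]; ring
    _ ≤ lcmDen / q * q * q := by rw [mul_assoc]; exact Nat.mul_le_mul_left _ hsq
    _ ≤ lcmDen * q := Nat.mul_le_mul_right _ (Nat.div_mul_le_self _ _)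

theorem four_mul_sum_defect_le (T : Multiset (ℕ × ℕ)) (m : ℕ) :
    4 * (T.map defect).sum m ≤ lcmDen * (T.map Prod.snd).sum := by
  rw [Pi.multiset_sum_apply, Multiset.map_map, ← Multiset.sum_map_mul_left,
    ← Multiset.sum_map_mul_left]
  exact Multiset.sum_map_le_sum_map _ _ fun c _ => four_mul_defect_le c m

/-- The scaled form of `W_m = 4 - m² H` for `1 ≤ m ≤ 8` with `H > 0`, where `s 1` determines
`lcmDen · H = 4 lcmDen - s 1`. -/
def IsDefectProfile (s : ℕ → ℕ) : Prop :=
  s 1 < 4 * lcmDen ∧ ∀ m ∈ List.range' 1 8, s m + m ^ 2 * (4 * lcmDen - s 1) = 4 * lcmDen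

instance : DecidablePred IsDefectProfile := fun _ => by
  unfold IsDefectProfile; infer_instance

/-- Necessary for a partial sum `s` to be completed to a profile by elements of total
denominator `rem`: each of them adds at most `lcmDen · q / 4`, and `W_8 ≥ 0` gives
`W_m ≥ (64 - m²) / 16`. -/
def CanReachProfile (rem : ℕ) (s : ℕ → ℕ) : Prop :=
  ∀ m ∈ List.range' 1 8, s m < 4 * lcmDen ∧ (64 - m ^ 2) * lcmDen ≤ 16 * s m + 4 * lcmDen * rem

instance (rem : ℕ) : DecidablePred (CanReachProfile rem) := fun _ => by
  unfold CanReachProfile; infer_instance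

theorem canReachProfile_of_isDefectProfile (s : ℕ → ℕ) (T : Multiset (ℕ × ℕ))
    (h : IsDefectProfile (s + (T.map defect).sum)) :
    CanReachProfile (T.map Prod.snd).sum s := by
  obtain ⟨h1, hm⟩ := h
  intro m hm8
  have hmm := hm m hm8
  obtain ⟨hm1, hm8⟩ : 1 ≤ m ∧ m ≤ 8 := by rw [List.mem_range'_1] at hm8; omega
  have h8 := hm 8 (by decide)
  have hbound := four_mul_sum_defect_le T m
  simp only [Pi.add_apply] at h1 h8 hmm
  set X := 4 * lcmDen - (s 1 + (T.map defect).sum 1)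
  have hsq1 : 1 ≤ m ^ 2 := Nat.one_le_pow _ _ hm1
  have hsq64 : m ^ 2 ≤ 64 := by nlinarith
  have hX1 : 1 ≤ X := by omega
  -- `h8` says `64 X ≤ 4 lcmDen`
  have hX : 16 * (m ^ 2 * X) ≤ m ^ 2 * lcmDen := by nlinarith
  refine ⟨by nlinarith, ?_⟩
  zify [hsq64] at *
  nlinarith

def numDen (z : ℚ) : ℕ × ℕ := (z.num.natAbs, z.den)

theorem natAbs_num_div_den {z : ℚ} (hz : 0 ≤ z) : ((z.num.natAbs : ℕ) : ℚ) / z.den = z := by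
  rw [Nat.cast_natAbs, Int.cast_abs, abs_of_nonneg (by exact_mod_cast Rat.num_nonneg.mpr hz),
    Rat.num_div_den]

theorem den_mul_bernB_natCast_mul {z : ℚ} (hz : 0 ≤ z) (m : ℕ) :
    (z.den : ℚ) * bernB (m * z) = z.den / 6 -
      (m * z.num.natAbs % z.den : ℕ) * ((z.den : ℚ) - (m * z.num.natAbs % z.den : ℕ)) / z.den := by
  have hq : (z.den : ℚ) ≠ 0 := by positivity
  have hmz : (m : ℚ) * z = ((m * z.num.natAbs : ℕ) : ℚ) / z.den := by
    rw [Nat.cast_mul, mul_div_assoc, natAbs_num_div_den hz]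
  rw [bernB, hmz, Int.fract_div_natCast_eq_div_natCast_mod]
  field_simp
  ring

theorem lcmDen_mul_den_mul_bernB {z : ℚ} (hz : 0 ≤ z) (hdvd : z.den ∣ lcmDen) (m : ℕ) :
    (lcmDen : ℚ) * (z.den * bernB (m * z)) = lcmDen * z.den / 6 - defect (numDen z) m := by
  have hr : m * z.num.natAbs % z.den ≤ z.den := (Nat.mod_lt _ z.pos).le
  rw [den_mul_bernB_natCast_mul hz, defect, numDen]
  push_cast [Nat.cast_div hdvd (by positivity : (z.den : ℚ) ≠ 0), Nat.cast_sub hr]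
  ring

theorem lcmDen_mul_lamS {S : Multiset ℚ} (h0 : ∀ z ∈ S, 0 ≤ z)
    (hdvd : ∀ z ∈ S, z.den ∣ lcmDen) (m : ℕ) :
    (lcmDen : ℚ) * lamS m S = lcmDen * dS S / 6 - ((S.map numDen).map defect).sum m := by
  rw [lamS, dS, ← Multiset.sum_map_mul_left,
    Multiset.map_congr rfl fun z hz => lcmDen_mul_den_mul_bernB (h0 z hz) (hdvd z hz) m,
    Multiset.sum_map_sub, Pi.multiset_sum_apply, Multiset.map_map, Multiset.map_map]
  push_cast [Nat.cast_multiset_sum, Multiset.map_map]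
  rw [Multiset.sum_map_div, Multiset.sum_map_mul_left]
  rfl

section Profile

variable {S : Multiset ℚ} {H : ℚ} (h0 : ∀ z ∈ S, 0 ≤ z) (hdvd : ∀ z ∈ S, z.den ∣ lcmDen)
  (hd : dS S = 24) (hzero : ∀ m : ℕ, 1 ≤ m → m ≤ 8 → hS m S H = 0)
include h0 hdvd hd hzero

theorem sum_defect_eq {m : ℕ} (hm1 : 1 ≤ m) (hm8 : m ≤ 8) :
    (((S.map numDen).map defect).sum m : ℚ) = 4 * lcmDen - m ^ 2 * (lcmDen * H) := by
  have h := lcmDen_mul_lamS h0 hdvd m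
  rw [hd, ← sub_eq_zero.mp (hzero m hm1 hm8)] at h
  push_cast at h
  linarith

theorem isDefectProfile_sum_defect (hH : 0 < H) :
    IsDefectProfile ((S.map numDen).map defect).sum := by
  set W := ((S.map numDen).map defect).sum
  have h1 := sum_defect_eq h0 hdvd hd hzero le_rfl (by norm_num)
  push_cast at h1
  have hW1 : W 1 < 4 * lcmDen := by
    have : (0 : ℚ) < lcmDen * H := mul_pos (by norm_num [lcmDen]) hH
    exact_mod_cast (by linarith : (W 1 : ℚ) < 4 * lcmDen)
  refine ⟨hW1, fun m hm => ?_⟩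
  rw [List.mem_range'_1] at hm
  have hm' := sum_defect_eq h0 hdvd hd hzero (m := m) (by omega) (by omega)
  exact_mod_cast (by push_cast [Nat.cast_sub hW1.le]; linear_combination hm' - m ^ 2 * h1 :
    ((W m + m ^ 2 * (4 * lcmDen - W 1) : ℕ) : ℚ) = (4 * lcmDen : ℕ))

end Profile

theorem map_numDen_div {S : Multiset ℚ} (h0 : ∀ z ∈ S, 0 ≤ z) :
    (S.map numDen).map (fun c => (c.1 : ℚ) / c.2) = S := by
  rw [Multiset.map_map]
  conv_rhs => rw [← Multiset.map_id S]
  exact Multiset.map_congr rfl fun z hz => natAbs_num_div_den (h0 z hz)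

def candidates : List (ℕ × ℕ) :=
  (List.range' 1 24).reverse.flatMap fun q =>
    ((List.range (q / 2 + 1)).filter fun a => Nat.Coprime a q).map fun a => (a, q)

theorem mem_candidates {a q : ℕ} :
    (a, q) ∈ candidates ↔ 0 < q ∧ q ≤ 24 ∧ 2 * a ≤ q ∧ a.Coprime q := by
  simp only [candidates, List.mem_flatMap, List.mem_reverse, List.mem_range'_1, List.mem_map,
    List.mem_filter, List.mem_range, Prod.mk.injEq, decide_eq_true_eq]
  constructor
  · rintro ⟨q, hq, a, ⟨ha, hcop⟩, rfl, rfl⟩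
    exact ⟨by omega, by omega, by omega, hcop⟩
  · rintro ⟨hq0, hq24, ha, hcop⟩
    exact ⟨q, by omega, a, ⟨by omega, hcop⟩, rfl, rfl⟩

theorem numDen_mem_candidates {z : ℚ} (hz0 : 0 ≤ z) (hz : z ≤ 1 / 2) (hden : z.den ≤ 24) :
    numDen z ∈ candidates := by
  refine mem_candidates.mpr ⟨z.pos, hden, ?_, z.reduced⟩
  rw [← natAbs_num_div_den hz0, div_le_iff₀ (by positivity)] at hz
  exact_mod_cast (by linarith : 2 * ((z.num.natAbs : ℕ) : ℚ) ≤ z.den)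

theorem boundedSearch_candidates :
    boundedSearch Prod.snd defect CanReachProfile IsDefectProfile candidates 24 0 =
      [[(1, 7), (2, 5), (1, 4), (1, 3), (1, 2), (0, 1), (0, 1), (0, 1)]] := by
  decide +kernel

theorem stmt_16 (S : Multiset ℚ) (H : ℚ) (hadm : Admissible S H)
    (hd : dS S = 24) (hzero : ∀ m : ℕ, 1 ≤ m → m ≤ 8 → hS m S H = 0) :
    H = 11 / 420 ∧ S = ({1 / 7, 2 / 5, 1 / 4, 1 / 3, 1 / 2, 0, 0, 0} : Multiset ℚ) := by
  obtain ⟨hrange, hH, -, -⟩ := hadm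
  have h0 : ∀ z ∈ S, 0 ≤ z := fun z hz => (hrange z hz).1
  have hden : ∀ z ∈ S, z.den ≤ 24 := fun z hz => hd ▸ den_le_dS hz
  have hdvd : ∀ z ∈ S, z.den ∣ lcmDen := fun z hz => dvd_lcmDen z.pos (hden z hz)
  have hsize : ((S.map numDen).map Prod.snd).sum = 24 := by rw [Multiset.map_map]; exact hd
  obtain ⟨X, hX, hXS⟩ := exists_mem_boundedSearch canReachProfile_of_isDefectProfile candidates
    (fun c hc => (mem_candidates.mp hc).1) 0 (S.map numDen)
    (fun c hc => by
      obtain ⟨z, hz, rfl⟩ := Multiset.mem_map.mp hc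
      exact numDen_mem_candidates (h0 z hz) (hrange z hz).2 (hden z hz))
    (by rw [zero_add]; exact isDefectProfile_sum_defect h0 hdvd hd hzero hH)
  rw [hsize, boundedSearch_candidates, List.mem_singleton] at hX
  subst hX
  constructor
  · have h1 := sum_defect_eq h0 hdvd hd hzero le_rfl (by norm_num)
    rw [← hXS] at h1
    norm_num [defect, lcmDen] at h1
    linarith
  · rw [← map_numDen_div h0, ← hXS]
    norm_num
    rfl
end
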